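/- arXiv:2105.10632 — 6 statements merged into one kernel-verified Lean document; each statement's English description precedes it below -/
import Mathlib

section
/- Let k ≥ 1 be an integer and let G be a strongly edge-colored graph whose average degree satisfies d(G) ≥ 2k − 1. Then G contains a rainbow matching of size at least k. -/
/-- The color degree of a vertex `v`: the number of distinct colors appearing
on edges of `G` incident to `v`. -/
noncomputable def colorDegree {V : Type*} (G : SimpleGraph V) (c : Sym2 V → ℕ) (v : V) : ℕ :=
  (c '' {e : Sym2 V | e ∈ G.edgeSet ∧ v ∈ e}).ncard

/-- `M` is a rainbow matching in the edge-colored graph `(G, c)`: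
a set of edges of `G`, pairwise vertex-disjoint, with pairwise distinct colors. -/
def IsRainbowMatching {V : Type*} (G : SimpleGraph V) (c : Sym2 V → ℕ)
    (M : Finset (Sym2 V)) : Prop :=
  ↑M ⊆ G.edgeSet ∧
  (∀ e ∈ M, ∀ f ∈ M, e ≠ f → ∀ v : V, v ∈ e → v ∉ f) ∧
  Set.InjOn c ↑M

/-- `(G, c)` is strongly edge-colored: for each color, the edges of that color form an
induced matching, i.e. any two distinct edges of the same color neither share a vertex
nor are joined by an edge of `G`. -/
def StronglyEdgeColored {V : Type*} (G : SimpleGraph V) (c : Sym2 V → ℕ) : Prop :=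
  ∀ e ∈ G.edgeSet, ∀ f ∈ G.edgeSet, e ≠ f → c e = c f →
    ∀ u v : V, u ∈ e → v ∈ f → u ≠ v ∧ ¬ G.Adj u v

/-!
Take a maximum rainbow matching `M`, with `m` edges covering a set `S` of `2m` vertices. Call a
neighbour `w` of an uncovered vertex `v` fresh if the colour of `vw` does not occur on `M`.
Maximality puts every fresh neighbour in `S`, and strongness maps the other neighbours
injectively (by colour) to the edges of `M` that send no edge to `v`. Hence `deg v ≤ m + p v`,
where `p v` counts the edges of `M` both of whose ends are fresh neighbours of `v`. Two uncovered
vertices `v ≠ v'` cannot share such an edge `ab`: replacing `ab` by `va` and `v'b` would give a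
larger rainbow matching. So `∑ p v ≤ m`, and comparing the degrees inside `S` with those outside
gives `∑ deg ≤ 2mn`. The average degree is then at most `2m`, and `2k - 1 ≤ 2m` forces `k ≤ m`.
-/

open Finset SimpleGraph

universe u

variable {V : Type u} {G : SimpleGraph V} {c : Sym2 V → ℕ}

lemma Sym2.card_toFinset_inter_le {α : Type*} [DecidableEq α] (z : Sym2 α) (s : Finset α) :
    #(z.toFinset ∩ s) ≤
      (if (z.toFinset ∩ s).Nonempty then 1 else 0) + (if z.toFinset ⊆ s then 1 else 0) := by
  induction z using Sym2.ind with
  | _ a b =>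
    rw [Sym2.toFinset_mk_eq]
    by_cases ha : a ∈ s <;> by_cases hb : b ∈ s <;> by_cases hab : a = b <;>
      simp [ha, hb, hab, insert_inter_of_mem, insert_inter_of_notMem, insert_subset_iff]

lemma StronglyEdgeColored.eq_of_color_eq (h : StronglyEdgeColored G c) {v w w' : V}
    (hw : G.Adj v w) (hw' : G.Adj v w') (hc : c s(v, w) = c s(v, w')) : w = w' := by
  by_contra hne
  exact (h _ hw _ hw' (fun he => hne (Sym2.congr_right.1 he)) hc v v
    (Sym2.mem_mk_left _ _) (Sym2.mem_mk_left _ _)).1 rfl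

variable (G) in
lemma SimpleGraph.sum_degree_le_add_sum_degree_compl [Fintype V] [DecidableEq V]
    [DecidableRel G.Adj] (S : Finset V) :
    ∑ w ∈ S, G.degree w ≤ #S * (#S - 1) + ∑ v ∈ Sᶜ, G.degree v := by
  have hdeg : ∀ w ∈ S, G.degree w ≤ (#S - 1) + #(Sᶜ.bipartiteAbove G.Adj w) := by
    intro w hw
    rw [← card_neighborFinset_eq_degree, ← card_erase_of_mem hw]
    refine (card_le_card fun x hx => ?_).trans (card_union_le _ _)
    rw [mem_neighborFinset] at hx
    by_cases hxS : x ∈ S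
    · exact mem_union_left _ (mem_erase.2 ⟨(G.ne_of_adj hx).symm, hxS⟩)
    · exact mem_union_right _ ((mem_bipartiteAbove _).2 ⟨mem_compl.2 hxS, hx⟩)
  calc ∑ w ∈ S, G.degree w ≤ ∑ w ∈ S, ((#S - 1) + #(Sᶜ.bipartiteAbove G.Adj w)) :=
        sum_le_sum hdeg
    _ = #S * (#S - 1) + ∑ v ∈ Sᶜ, #(S.bipartiteBelow G.Adj v) := by
        rw [sum_add_distrib, sum_const, smul_eq_mul,
          sum_card_bipartiteAbove_eq_sum_card_bipartiteBelow]
    _ ≤ #S * (#S - 1) + ∑ v ∈ Sᶜ, G.degree v := by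
        gcongr with v
        rw [← card_neighborFinset_eq_degree]
        exact card_le_card fun x hx => by
          simpa [G.adj_comm] using (mem_bipartiteBelow _).1 hx |>.2

namespace IsRainbowMatching

variable {M M' : Finset (Sym2 V)}

lemma empty : IsRainbowMatching G c ∅ := by
  simp [IsRainbowMatching]

lemma mono (hM : IsRainbowMatching G c M) (h : M' ⊆ M) : IsRainbowMatching G c M' :=
  ⟨(coe_subset.2 h).trans hM.1, fun e he f hf => hM.2.1 e (h he) f (h hf),
    hM.2.2.mono (coe_subset.2 h)⟩

end IsRainbowMatching

section Covered

variable [DecidableEq V] {M M' : Finset (Sym2 V)} {e : Sym2 V} {u x y : V}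

def coveredVertices (M : Finset (Sym2 V)) : Finset V := M.biUnion Sym2.toFinset

@[simp]
lemma mem_coveredVertices : u ∈ coveredVertices M ↔ ∃ e ∈ M, u ∈ e := by
  simp [coveredVertices]

lemma coveredVertices_mono (h : M' ⊆ M) : coveredVertices M' ⊆ coveredVertices M :=
  biUnion_subset_biUnion_of_subset_left _ h

lemma mk_notMem_of_notMem_coveredVertices (hx : x ∉ coveredVertices M) : s(x, y) ∉ M :=
  fun h => hx (mem_coveredVertices.2 ⟨_, h, Sym2.mem_mk_left _ _⟩)

lemma mem_coveredVertices_insert_mk :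
    u ∈ coveredVertices (insert s(x, y) M) ↔ u = x ∨ u = y ∨ u ∈ coveredVertices M := by
  simp [coveredVertices, or_assoc]

lemma card_insert_mk_of_notMem_coveredVertices (hx : x ∉ coveredVertices M) :
    #(insert s(x, y) M) = #M + 1 :=
  card_insert_of_notMem (mk_notMem_of_notMem_coveredVertices hx)

namespace IsRainbowMatching

lemma notMem_coveredVertices_erase (hM : IsRainbowMatching G c M) (he : e ∈ M) (hu : u ∈ e) :
    u ∉ coveredVertices (M.erase e) := by
  simp only [mem_coveredVertices, mem_erase, not_exists, not_and]
  exact fun f ⟨hfe, hf⟩ => hM.2.1 e he f hf (Ne.symm hfe) u hu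

lemma insert (hM : IsRainbowMatching G c M) (hxy : G.Adj x y) (hx : x ∉ coveredVertices M)
    (hy : y ∉ coveredVertices M) (hc : c s(x, y) ∉ M.image c) :
    IsRainbowMatching G c (insert s(x, y) M) := by
  have hfresh : ∀ z ∈ s(x, y), ∀ f ∈ M, z ∉ f := by
    rintro z hz f hf hzf
    rcases Sym2.mem_iff.1 hz with rfl | rfl
    exacts [hx (mem_coveredVertices.2 ⟨f, hf, hzf⟩),
      hy (mem_coveredVertices.2 ⟨f, hf, hzf⟩)]
  refine ⟨?_, ?_, ?_⟩
  · rw [coe_insert]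
    exact Set.insert_subset hxy hM.1
  · intro e he f hf hne z hze
    rcases mem_insert.1 he with rfl | he <;> rcases mem_insert.1 hf with rfl | hf
    · exact absurd rfl hne
    · exact hfresh z hze f hf
    · exact fun hzf => hfresh z hzf e he hze
    · exact hM.2.1 e he f hf hne z hze
  · rw [coe_insert, Set.injOn_insert (mk_notMem_of_notMem_coveredVertices hx)]
    exact ⟨hM.2.2, fun ⟨f, hf, hcf⟩ => hc (mem_image.2 ⟨f, hf, hcf⟩)⟩

lemma card_coveredVertices (hM : IsRainbowMatching G c M) : #(coveredVertices M) = 2 * #M := by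
  rw [coveredVertices, card_biUnion, sum_const_nat, mul_comm]
  · exact fun e he => Sym2.card_toFinset_of_not_isDiag e (G.not_isDiag_of_mem_edgeSet (hM.1 he))
  · intro e he f hf hne
    simp only [Function.onFun]
    rw [Finset.disjoint_left]
    exact fun u hue huf =>
      hM.2.1 e he f hf hne u (Sym2.mem_toFinset.1 hue) (Sym2.mem_toFinset.1 huf)

end IsRainbowMatching

end Covered

def IsMaxRainbowMatching (G : SimpleGraph V) (c : Sym2 V → ℕ) (M : Finset (Sym2 V)) : Prop :=
  IsRainbowMatching G c M ∧ ∀ M', IsRainbowMatching G c M' → #M' ≤ #M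

lemma exists_isMaxRainbowMatching [Finite V] (G : SimpleGraph V) (c : Sym2 V → ℕ) :
    ∃ M, IsMaxRainbowMatching G c M := by
  classical
  have := Fintype.ofFinite V
  obtain ⟨M, hM, hmax⟩ := (univ.filter (IsRainbowMatching G c)).exists_max_image card
    ⟨∅, mem_filter.2 ⟨mem_univ _, IsRainbowMatching.empty⟩⟩
  exact ⟨M, (mem_filter.1 hM).2, fun M' hM' => hmax M' (mem_filter.2 ⟨mem_univ _, hM'⟩)⟩

section Fresh

variable [Fintype V] [DecidableEq V] [DecidableRel G.Adj] {M : Finset (Sym2 V)} {e : Sym2 V}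
  {v v' w a b : V}

variable (G c) in
def freshNeighbors (M : Finset (Sym2 V)) (v : V) : Finset V :=
  {w ∈ G.neighborFinset v | c s(v, w) ∉ M.image c}

variable (G c) in
def fullyFreshEdges (M : Finset (Sym2 V)) (v : V) : Finset (Sym2 V) :=
  {e ∈ M | e.toFinset ⊆ freshNeighbors G c M v}

@[simp]
lemma mem_freshNeighbors :
    w ∈ freshNeighbors G c M v ↔ G.Adj v w ∧ c s(v, w) ∉ M.image c := by
  simp [freshNeighbors]

lemma exists_rainbowMatching_card_gt_of_swap (hstrong : StronglyEdgeColored G c)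
    (hM : IsRainbowMatching G c M) (hab : s(a, b) ∈ M) (hv : v ∉ coveredVertices M)
    (hv' : v' ∉ coveredVertices M) (hvv' : v ≠ v') (ha : a ∈ freshNeighbors G c M v)
    (hb : b ∈ freshNeighbors G c M v') :
    ∃ M', IsRainbowMatching G c M' ∧ #M < #M' := by
  rw [mem_freshNeighbors] at ha hb
  have hcov : ∀ z ∈ s(a, b), z ∈ coveredVertices M := fun z hz =>
    mem_coveredVertices.2 ⟨_, hab, hz⟩
  have hvb : v ≠ b := fun h => hv (h ▸ hcov b (Sym2.mem_mk_right _ _))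
  have hv'a : v' ≠ a := fun h => hv' (h ▸ hcov a (Sym2.mem_mk_left _ _))
  set N := M.erase s(a, b)
  have hN : IsRainbowMatching G c N := hM.mono (erase_subset _ _)
  have hNM : coveredVertices N ⊆ coveredVertices M := coveredVertices_mono (erase_subset _ _)
  have himage : N.image c ⊆ M.image c := image_subset_image (erase_subset _ _)
  have hedge : s(v, a) ≠ s(v', b) := by
    rw [Ne, Sym2.eq_iff]
    rintro (⟨h, -⟩ | ⟨h, -⟩)
    exacts [hvv' h, hvb h]
  -- the strong coloring separates the two new colors, since `a` and `b` are adjacent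
  have hcolor : c s(v, a) ≠ c s(v', b) := fun h =>
    (hstrong _ ha.1 _ hb.1 hedge h a b (Sym2.mem_mk_right _ _) (Sym2.mem_mk_right _ _)).2 (hM.1 hab)
  have hN' : IsRainbowMatching G c (insert s(v', b) N) :=
    hN.insert hb.1 (fun h => hv' (hNM h))
      (hM.notMem_coveredVertices_erase hab (Sym2.mem_mk_right _ _)) (fun h => hb.2 (himage h))
  have hv_notMem : v ∉ coveredVertices (insert s(v', b) N) := by
    simp only [mem_coveredVertices_insert_mk, not_or]
    exact ⟨hvv', hvb, fun h => hv (hNM h)⟩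
  refine ⟨insert s(v, a) (insert s(v', b) N), hN'.insert ha.1 hv_notMem ?_ ?_, ?_⟩
  · simp only [mem_coveredVertices_insert_mk, not_or]
    exact ⟨hv'a.symm, G.ne_of_adj (hM.1 hab),
      hM.notMem_coveredVertices_erase hab (Sym2.mem_mk_left _ _)⟩
  · rw [image_insert, mem_insert, not_or]
    exact ⟨hcolor, fun h => ha.2 (himage h)⟩
  · rw [card_insert_mk_of_notMem_coveredVertices hv_notMem,
      card_insert_mk_of_notMem_coveredVertices (fun h => hv' (hNM h)), card_erase_add_one hab]
    exact Nat.lt_succ_self _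

lemma card_oldNeighbors_le (hstrong : StronglyEdgeColored G c) (hM : IsRainbowMatching G c M)
    (hv : v ∉ coveredVertices M) :
    #{w ∈ G.neighborFinset v | c s(v, w) ∈ M.image c} ≤
      #{e ∈ M | ¬(e.toFinset ∩ G.neighborFinset v).Nonempty} := by
  set O := {w ∈ G.neighborFinset v | c s(v, w) ∈ M.image c}
  have hinj : Set.InjOn (fun w => c s(v, w)) O := fun w hw w' hw' h =>
    hstrong.eq_of_color_eq (by simp_all [O]) (by simp_all [O]) h
  -- an old color is that of an edge `e` of `M`; strongness forbids edges from `v` to `e`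
  have hcolors : O.image (fun w => c s(v, w)) ⊆
      {e ∈ M | ¬(e.toFinset ∩ G.neighborFinset v).Nonempty}.image c := by
    simp only [subset_iff, mem_image, mem_filter, O]
    rintro _ ⟨w, ⟨hw, e, he, hce⟩, rfl⟩
    refine ⟨e, ⟨he, ?_⟩, hce⟩
    rintro ⟨u, hu⟩
    rw [mem_inter, Sym2.mem_toFinset, mem_neighborFinset] at hu
    have hne : e ≠ s(v, w) := fun h =>
      hv (mem_coveredVertices.2 ⟨e, he, h ▸ Sym2.mem_mk_left _ _⟩)
    rw [mem_neighborFinset] at hw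
    exact (hstrong e (hM.1 he) _ hw hne hce u v hu.1 (Sym2.mem_mk_left _ _)).2 hu.2.symm
  calc #O = #(O.image fun w => c s(v, w)) := (card_image_of_injOn hinj).symm
    _ ≤ _ := card_le_card hcolors
    _ ≤ _ := card_image_le

namespace IsMaxRainbowMatching

lemma freshNeighbors_subset (hM : IsMaxRainbowMatching G c M) (hv : v ∉ coveredVertices M) :
    freshNeighbors G c M v ⊆ coveredVertices M := by
  intro w hw
  by_contra hw'
  rw [mem_freshNeighbors] at hw
  have := hM.2 _ (hM.1.insert hw.1 hv hw' hw.2)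
  rw [card_insert_mk_of_notMem_coveredVertices hv] at this
  omega

lemma eq_of_mem_fullyFreshEdges (hstrong : StronglyEdgeColored G c)
    (hM : IsMaxRainbowMatching G c M) (hv : v ∉ coveredVertices M)
    (hv' : v' ∉ coveredVertices M) (he : e ∈ fullyFreshEdges G c M v)
    (he' : e ∈ fullyFreshEdges G c M v') : v = v' := by
  by_contra hvv'
  rw [fullyFreshEdges, mem_filter] at he he'
  induction e using Sym2.ind with
  | _ a b =>
    obtain ⟨M', hM', hlt⟩ := exists_rainbowMatching_card_gt_of_swap hstrong hM.1 he.1 hv hv'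
      hvv' (he.2 (by simp)) (he'.2 (by simp))
    exact (hM.2 M' hM').not_gt hlt

lemma card_freshNeighbors_le (hM : IsMaxRainbowMatching G c M) (hv : v ∉ coveredVertices M) :
    #(freshNeighbors G c M v) ≤
      #{e ∈ M | (e.toFinset ∩ G.neighborFinset v).Nonempty} + #(fullyFreshEdges G c M v) := by
  set F := freshNeighbors G c M v
  calc #F ≤ ∑ e ∈ M, #(e.toFinset ∩ F) := by
        refine (card_le_card fun w hw => ?_).trans card_biUnion_le
        obtain ⟨e, he, hwe⟩ := mem_coveredVertices.1 (hM.freshNeighbors_subset hv hw)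
        exact mem_biUnion.2 ⟨e, he, mem_inter.2 ⟨Sym2.mem_toFinset.2 hwe, hw⟩⟩
    _ ≤ ∑ e ∈ M,
          ((if (e.toFinset ∩ F).Nonempty then 1 else 0) + (if e.toFinset ⊆ F then 1 else 0)) :=
        sum_le_sum fun e _ => e.card_toFinset_inter_le F
    _ = #{e ∈ M | (e.toFinset ∩ F).Nonempty} + #(fullyFreshEdges G c M v) := by
        rw [sum_add_distrib, card_filter, fullyFreshEdges, card_filter]
    _ ≤ _ := by
        gcongr
        exact filter_subset _ _

lemma degree_le (hstrong : StronglyEdgeColored G c) (hM : IsMaxRainbowMatching G c M)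
    (hv : v ∉ coveredVertices M) : G.degree v ≤ #M + #(fullyFreshEdges G c M v) := by
  have hsplit := card_filter_add_card_filter_not (s := G.neighborFinset v)
    (fun w => c s(v, w) ∈ M.image c)
  have hedges := card_filter_add_card_filter_not (s := M)
    (fun e => (e.toFinset ∩ G.neighborFinset v).Nonempty)
  have hold := card_oldNeighbors_le hstrong hM.1 hv
  have hfresh := hM.card_freshNeighbors_le hv
  rw [card_neighborFinset_eq_degree] at hsplit
  simp only [freshNeighbors] at hfresh
  omega

lemma sum_degree_compl_le (hstrong : StronglyEdgeColored G c) (hM : IsMaxRainbowMatching G c M) :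
    ∑ v ∈ (coveredVertices M)ᶜ, G.degree v ≤ #M * #(coveredVertices M)ᶜ + #M := by
  set U := (coveredVertices M)ᶜ
  have hfully : ∑ v ∈ U, #(fullyFreshEdges G c M v) ≤ #M := calc
    ∑ v ∈ U, #(fullyFreshEdges G c M v)
        = ∑ e ∈ M, #(U.bipartiteBelow (fun v e => e.toFinset ⊆ freshNeighbors G c M v) e) :=
      sum_card_bipartiteAbove_eq_sum_card_bipartiteBelow _
    _ ≤ ∑ _e ∈ M, 1 := by
      refine sum_le_sum fun e he => card_le_one.2 fun v hv v' hv' => ?_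
      rw [mem_bipartiteBelow, mem_compl] at hv hv'
      exact hM.eq_of_mem_fullyFreshEdges hstrong hv.1 hv'.1 (mem_filter.2 ⟨he, hv.2⟩)
        (mem_filter.2 ⟨he, hv'.2⟩)
    _ = #M := by rw [sum_const, smul_eq_mul, mul_one]
  calc ∑ v ∈ U, G.degree v ≤ ∑ v ∈ U, (#M + #(fullyFreshEdges G c M v)) :=
        sum_le_sum fun v hv => hM.degree_le hstrong (mem_compl.1 hv)
    _ = #M * #U + ∑ v ∈ U, #(fullyFreshEdges G c M v) := by
        rw [sum_add_distrib, sum_const, smul_eq_mul, mul_comm]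
    _ ≤ #M * #U + #M := by gcongr

lemma sum_degree_le (hstrong : StronglyEdgeColored G c) (hM : IsMaxRainbowMatching G c M) :
    ∑ v, G.degree v ≤ 2 * #M * Fintype.card V := by
  set S := coveredVertices M
  have hS : #S = 2 * #M := hM.1.card_coveredVertices
  have hcard : #S + #Sᶜ = Fintype.card V := card_add_card_compl S
  have hcovered := G.sum_degree_le_add_sum_degree_compl S
  have huncovered := hM.sum_degree_compl_le hstrong
  have hpair : #S * (#S - 1) + #S = #S * #S := by
    rw [Nat.mul_sub_one, Nat.sub_add_cancel (Nat.le_mul_self _)]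
  rw [← sum_add_sum_compl S, ← hcard]
  nlinarith

end IsMaxRainbowMatching

end Fresh

theorem rainbow_matching_strongly_edge_colored_avg_degree_general
    {V : Type*} [Fintype V] (k : ℕ)
    (G : SimpleGraph V) [DecidableRel G.Adj] (c : Sym2 V → ℕ)
    (hstrong : StronglyEdgeColored G c)
    (havg : (2 * (k : ℚ) - 1) ≤ (∑ v, (G.degree v : ℚ)) / (Fintype.card V : ℚ)) :
    ∃ M : Finset (Sym2 V), IsRainbowMatching G c M ∧ k ≤ M.card := by
  classical
  obtain ⟨M, hM⟩ := exists_isMaxRainbowMatching G c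
  refine ⟨M, hM.1, ?_⟩
  have hsum : ∑ v, (G.degree v : ℚ) ≤ 2 * #M * Fintype.card V := by
    exact_mod_cast hM.sum_degree_le hstrong
  have hdiv : (∑ v, (G.degree v : ℚ)) / Fintype.card V ≤ 2 * #M :=
    div_le_of_le_mul₀ (by positivity) (by positivity) hsum
  have hlt : (k : ℚ) < #M + 1 := by linarith
  exact Nat.lt_succ_iff.1 (by exact_mod_cast hlt)

/-- Theorem 5 (Zhou): every strongly edge-colored graph with average degree at least
`2k - 1` contains a rainbow matching of size at least `k`. -/
theorem rainbow_matching_strongly_edge_colored_avg_degree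
    {V : Type*} [Fintype V] (k : ℕ) (hk : 1 ≤ k)
    (G : SimpleGraph V) [DecidableRel G.Adj] (c : Sym2 V → ℕ)
    (hstrong : StronglyEdgeColored G c)
    (havg : (2 * (k : ℚ) - 1) ≤ (∑ v, (G.degree v : ℚ)) / (Fintype.card V : ℚ)) :
    ∃ M : Finset (Sym2 V), IsRainbowMatching G c M ∧ k ≤ M.card :=
  rainbow_matching_strongly_edge_colored_avg_degree_general k G c hstrong havg
end

section
/- Let k ≥ 1 and let G be an edge-colored graph on vertex set V with average color degree d̂(G) ≥ 2k − 1 and no rainbow matching of size k, which is edge-minimal with these properties in the following sense: every edge-colored graph H obtained from G by deleting at least one edge (with the coloring restricted) that satisfies d̂(H) ≥ 2k − 1 and is not K̃₄ contains a rainbow matching of size k. Then for every color α, the spanning subgraph of G formed by the edges of color α is a forest of stars; equivalently, it contains no path on four vertices and no triangle. -/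
/-- The canonical proper 3-edge-coloring of `K₄` in which every color class is a
perfect matching: the edge `{i, j}` gets color `i xor j`. -/
def k4Coloring : Sym2 (Fin 4) → ℕ :=
  Sym2.lift ⟨fun i j => i.val ^^^ j.val, fun i j => Nat.xor_comm i.val j.val⟩

/-- `(G, c)` is isomorphic, as an edge-colored graph, to `K̃₄`: there is a bijection of the
vertex set with `Fin 4` under which `G` is complete and two edges of `G` have equal colors
iff the corresponding edges of `K̃₄` have equal colors. -/
def IsK4Tilde {V : Type*} (G : SimpleGraph V) (c : Sym2 V → ℕ) : Prop :=
  ∃ f : V ≃ Fin 4,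
    (∀ u v : V, G.Adj u v ↔ u ≠ v) ∧
    (∀ u v w x : V, G.Adj u v → G.Adj w x →
      (c s(u, v) = c s(w, x) ↔ k4Coloring s(f u, f v) = k4Coloring s(f w, f x)))

lemma key_lemma
    {V : Type*} [Fintype V] (k : ℕ)
    (G : SimpleGraph V) (c : Sym2 V → ℕ)
    (havg : (2 * (k : ℚ) - 1) ≤ (∑ v, (colorDegree G c v : ℚ)) / (Fintype.card V : ℚ))
    (hno : ¬ ∃ M : Finset (Sym2 V), IsRainbowMatching G c M ∧ M.card = k)
    (hmin : ∀ H : SimpleGraph V, H < G →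
      ((2 * (k : ℚ) - 1) ≤ (∑ v, (colorDegree H c v : ℚ)) / (Fintype.card V : ℚ)) →
      ¬ IsK4Tilde H c →
      ∃ M : Finset (Sym2 V), IsRainbowMatching H c M ∧ M.card = k)
    (x y : V) (hxy : G.Adj x y)
    (hx : ∃ e ∈ G.edgeSet, e ≠ s(x, y) ∧ x ∈ e ∧ c e = c s(x, y))
    (hy : ∃ e ∈ G.edgeSet, e ≠ s(x, y) ∧ y ∈ e ∧ c e = c s(x, y)) :
    False := by
  set H : SimpleGraph V := G.deleteEdges {s(x, y)} with hH
  have hHedge : H.edgeSet = G.edgeSet \ {s(x, y)} := G.edgeSet_deleteEdges _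
  have hHle : H ≤ G := G.deleteEdges_le _
  have hHlt : H < G := by
    refine lt_of_le_of_ne hHle (fun h => ?_)
    have : H.Adj x y := h ▸ hxy
    simp [hH] at this
  -- color degrees are preserved
  have hcd : ∀ v, colorDegree H c v = colorDegree G c v := by
    intro v
    unfold colorDegree
    congr 1
    apply Set.Subset.antisymm
    · exact Set.image_mono (fun e he => ⟨(hHedge ▸ he.1).1, he.2⟩)
    · rintro κ ⟨e, ⟨heG, hve⟩, rfl⟩
      by_cases hexy : e = s(x, y)
      · subst hexy
        rcases Sym2.mem_iff.mp hve with rfl | rfl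
        · obtain ⟨e', he'G, hne, hxe', hce'⟩ := hx
          exact ⟨e', ⟨hHedge ▸ ⟨he'G, hne⟩, hxe'⟩, hce'⟩
        · obtain ⟨e', he'G, hne, hye', hce'⟩ := hy
          exact ⟨e', ⟨hHedge ▸ ⟨he'G, hne⟩, hye'⟩, hce'⟩
      · exact ⟨e, ⟨hHedge ▸ ⟨heG, hexy⟩, hve⟩, rfl⟩
  have havgH : (2 * (k : ℚ) - 1) ≤ (∑ v, (colorDegree H c v : ℚ)) / (Fintype.card V : ℚ) := by
    simpa [hcd] using havg
  have hnotK4 : ¬ IsK4Tilde H c := by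
    rintro ⟨f, hcomp, -⟩
    have := (hcomp x y).mpr hxy.ne
    simp [hH] at this
  obtain ⟨M, ⟨hMsub, hMdisj, hMinj⟩, hMcard⟩ := hmin H hHlt havgH hnotK4
  exact hno ⟨M, ⟨fun e he => (hHedge ▸ hMsub he).1, hMdisj, hMinj⟩, hMcard⟩

/-- In an edge-minimal counterexample to the rainbow-matching theorem, every color class
is a forest of stars: it contains no path on four vertices and no triangle. -/
theorem color_classes_are_star_forests
    {V : Type*} [Fintype V] (k : ℕ) (hk : 1 ≤ k)
    (G : SimpleGraph V) (c : Sym2 V → ℕ)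
    (havg : (2 * (k : ℚ) - 1) ≤ (∑ v, (colorDegree G c v : ℚ)) / (Fintype.card V : ℚ))
    (hno : ¬ ∃ M : Finset (Sym2 V), IsRainbowMatching G c M ∧ M.card = k)
    (hmin : ∀ H : SimpleGraph V, H < G →
      ((2 * (k : ℚ) - 1) ≤ (∑ v, (colorDegree H c v : ℚ)) / (Fintype.card V : ℚ)) →
      ¬ IsK4Tilde H c →
      ∃ M : Finset (Sym2 V), IsRainbowMatching H c M ∧ M.card = k) :
    ∀ α : ℕ,
      (¬ ∃ a b d e : V, a ≠ b ∧ a ≠ d ∧ a ≠ e ∧ b ≠ d ∧ b ≠ e ∧ d ≠ e ∧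
        G.Adj a b ∧ G.Adj b d ∧ G.Adj d e ∧
        c s(a, b) = α ∧ c s(b, d) = α ∧ c s(d, e) = α) ∧
      (¬ ∃ a b d : V, G.Adj a b ∧ G.Adj b d ∧ G.Adj d a ∧
        c s(a, b) = α ∧ c s(b, d) = α ∧ c s(d, a) = α) := by
  intro α
  constructor
  · rintro ⟨a, b, d, e, hab', had, hae, hbd', hbe, hde', hab, hbd, hde, cab, cbd, cde⟩
    refine key_lemma k G c havg hno hmin b d hbd
      ⟨s(a, b), hab, ?_, ?_, cab.trans cbd.symm⟩
      ⟨s(d, e), hde, ?_, ?_, cde.trans cbd.symm⟩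
    · simp [Sym2.eq_iff, hab', had]
    · simp
    · simp [Sym2.eq_iff, hbd'.symm, hbe.symm]
    · simp
  · rintro ⟨a, b, d, hab, hbd, hda, cab, cbd, cda⟩
    refine key_lemma k G c havg hno hmin b d hbd
      ⟨s(a, b), hab, ?_, ?_, cab.trans cbd.symm⟩
      ⟨s(d, a), hda, ?_, ?_, cda.trans cbd.symm⟩
    · simp [Sym2.eq_iff, hab.ne, hda.ne']
    · simp
    · simp [Sym2.eq_iff, hbd.ne', hab.ne]
    · simp
end

section
/- Let k ≥ 2 and let G be an edge-colored graph such that for every vertex v, the graph G − v contains a rainbow matching of size k − 1. Suppose a is an integer such that every rainbow matching M of size k − 1 in G satisfies |φ(G[V(G) ∖ V(M)])| ≤ a, where φ(G[U]) denotes the set of colors appearing on edges of the induced subgraph G[U]. If G contains no rainbow matching of size k, then every vertex of G has color degree at most 2(k − 1) + a. -/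
/-- Claim 1 (maximum color degree bound): if for every vertex `v` the graph `G - v` has a
rainbow matching of size `k - 1`, every rainbow matching `M` of size `k - 1` leaves at most
`a` colors on `G[V ∖ V(M)]`, and `G` has no rainbow matching of size `k`, then every vertex
has color degree at most `2(k - 1) + a`. -/
theorem max_colorDegree_le
    {V : Type*} [Fintype V] (k : ℕ) (hk : 2 ≤ k)
    (G : SimpleGraph V) (c : Sym2 V → ℕ) (a : ℕ)
    (hdel : ∀ v : V, ∃ M : Finset (Sym2 V),
      IsRainbowMatching G c M ∧ M.card = k - 1 ∧ ∀ e ∈ M, v ∉ e)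
    (ha : ∀ M : Finset (Sym2 V), IsRainbowMatching G c M → M.card = k - 1 →
      (c '' {e : Sym2 V | e ∈ G.edgeSet ∧ ∀ x ∈ e, ∀ f ∈ M, x ∉ f}).ncard ≤ a)
    (hno : ¬ ∃ M : Finset (Sym2 V), IsRainbowMatching G c M ∧ M.card = k) :
    ∀ v : V, colorDegree G c v ≤ 2 * (k - 1) + a := by
  classical
  intro v
  obtain ⟨M, hM, hMcard, hMv⟩ := hdel v
  set VM : Finset V := M.biUnion (fun e => {x | x ∈ e}.toFinset) with hVMdef
  have hVMcard : VM.card ≤ 2 * (k - 1) := by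
    calc VM.card ≤ ∑ e ∈ M, ({x | x ∈ e}.toFinset).card := Finset.card_biUnion_le
    _ ≤ ∑ _e ∈ M, 2 := Finset.sum_le_sum (fun e _ => by
        induction e using Sym2.ind with
        | _ x y =>
          refine (Finset.card_le_card (fun z hz => ?_)).trans
            ((Finset.card_insert_le x {y}).trans (by simp))
          rw [Set.mem_toFinset] at hz
          simpa using hz)
    _ = 2 * (k - 1) := by rw [Finset.sum_const, hMcard]; ring
  set A : Set ℕ := (fun u => c s(v, u)) '' (VM : Set V) with hAdef
  set B : Set ℕ :=
    c '' {e : Sym2 V | e ∈ G.edgeSet ∧ ∀ x ∈ e, ∀ f ∈ M, x ∉ f} with hBdef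
  have hsub : c '' {e : Sym2 V | e ∈ G.edgeSet ∧ v ∈ e} ⊆ A ∪ B := by
    rintro col ⟨e, ⟨heG, hve⟩, rfl⟩
    by_cases hcase : ∃ x ∈ e, ∃ f ∈ M, x ∈ f
    · obtain ⟨x, hxe, f, hfM, hxf⟩ := hcase
      have hxv : v ≠ x := by
        rintro rfl; exact hMv f hfM hxf
      have he : e = s(v, x) := (Sym2.mem_and_mem_iff hxv).mp ⟨hve, hxe⟩
      left
      exact ⟨x, by simp [hVMdef, Set.mem_toFinset]; exact ⟨f, hfM, hxf⟩, by simp [he]⟩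
    · right
      refine ⟨e, ⟨heG, ?_⟩, rfl⟩
      intro x hx f hf hxf
      exact hcase ⟨x, hx, f, hf, hxf⟩
  have hA : A.ncard ≤ 2 * (k - 1) := by
    calc A.ncard ≤ (VM : Set V).ncard := Set.ncard_image_le (Set.toFinite _)
    _ = VM.card := Set.ncard_coe_finset VM
    _ ≤ 2 * (k - 1) := hVMcard
  have hB : B.ncard ≤ a := ha M hM hMcard
  calc colorDegree G c v ≤ (A ∪ B).ncard :=
        Set.ncard_le_ncard hsub (Set.toFinite _)
    _ ≤ A.ncard + B.ncard := Set.ncard_union_le A B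
    _ ≤ 2 * (k - 1) + a := Nat.add_le_add hA hB
end

section
/- Let G be an edge-colored graph, let M be a rainbow matching in G, and let uv ∈ M be an edge of color c. Suppose there is a vertex w ∈ V(G) ∖ V(M) adjacent to v with φ(vw) ∉ φ(M), and there is an edge xy of G with x, y ∈ V(G) ∖ V(M), φ(xy) = c, and w ∉ {x, y}. Then G contains a rainbow matching of size |M| + 1. -/
/-- Configuration (1.1): if `uv ∈ M` has color `c₀`, some vertex `w` outside `V(M)` is
joined to `v` by a free-colored edge, and there is an edge `xy` of color `c₀` with both
endpoints outside `V(M)` avoiding `w`, then `G` has a rainbow matching of size `|M| + 1`. -/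
theorem config_one_one
    {V : Type*} [Fintype V] (G : SimpleGraph V) (c : Sym2 V → ℕ)
    (M : Finset (Sym2 V)) (hM : IsRainbowMatching G c M)
    (u v : V) (huv : s(u, v) ∈ M)
    (w : V) (hwM : ∀ f ∈ M, w ∉ f) (hvw : G.Adj v w)
    (hfree : ∀ f ∈ M, c s(v, w) ≠ c f)
    (x y : V) (hxy : G.Adj x y)
    (hxM : ∀ f ∈ M, x ∉ f) (hyM : ∀ f ∈ M, y ∉ f)
    (hcol : c s(x, y) = c s(u, v))
    (hwx : w ≠ x) (hwy : w ≠ y) :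
    ∃ M' : Finset (Sym2 V), IsRainbowMatching G c M' ∧ M'.card = M.card + 1 := by
  classical
  obtain ⟨hMe, hMd, hMc⟩ := hM
  have hvM : ∀ f ∈ M, f ≠ s(u, v) → v ∉ f := fun f hf hne =>
    hMd s(u, v) huv f hf (Ne.symm hne) v (by simp)
  have hxuv : x ∉ s(u, v) := hxM _ huv
  have hyuv : y ∉ s(u, v) := hyM _ huv
  have hvx : v ≠ x := fun h => hxuv (by rw [← h]; simp)
  have hvy : v ≠ y := fun h => hyuv (by rw [← h]; simp)
  have hvw' : v ≠ w := hvw.ne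
  have hxy' : x ≠ y := hxy.ne
  have hne1 : s(v, w) ≠ s(x, y) := by
    intro h
    rw [Sym2.eq_iff] at h
    rcases h with ⟨h, -⟩ | ⟨h, -⟩
    · exact hvx h
    · exact hvy h
  have hvwM : s(v, w) ∉ M := fun h => hwM _ h (by simp)
  have hxyM : s(x, y) ∉ M := fun h => hxM _ h (by simp)
  have hcvw_cxy : c s(v, w) ≠ c s(x, y) := by
    rw [hcol]; exact hfree _ huv
  refine ⟨insert s(v, w) (insert s(x, y) (M.erase s(u, v))), ⟨?_, ?_, ?_⟩, ?_⟩
  · intro e he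
    simp only [Finset.coe_insert, Set.mem_insert_iff] at he
    rcases he with rfl | rfl | he
    · exact hvw
    · exact hxy
    · exact hMe (Finset.mem_coe.mpr (Finset.mem_of_mem_erase he))
  · intro e he f hf hef z hze
    simp only [Finset.mem_insert] at he hf
    rcases he with rfl | rfl | he <;> rcases hf with rfl | rfl | hf
    · exact absurd rfl hef
    · rcases Sym2.mem_iff.mp hze with rfl | rfl
      · simp only [Sym2.mem_iff]; push_neg; exact ⟨hvx, hvy⟩
      · simp only [Sym2.mem_iff]; push_neg; exact ⟨hwx, hwy⟩
    · rcases Sym2.mem_iff.mp hze with rfl | rfl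
      · exact hvM f (Finset.mem_of_mem_erase hf) (Finset.ne_of_mem_erase hf)
      · exact hwM f (Finset.mem_of_mem_erase hf)
    · rcases Sym2.mem_iff.mp hze with rfl | rfl
      · simp only [Sym2.mem_iff]; push_neg
        exact ⟨fun h => hvx h.symm, fun h => hwx h.symm⟩
      · simp only [Sym2.mem_iff]; push_neg
        exact ⟨fun h => hvy h.symm, fun h => hwy h.symm⟩
    · exact absurd rfl hef
    · rcases Sym2.mem_iff.mp hze with rfl | rfl
      · exact hxM f (Finset.mem_of_mem_erase hf)
      · exact hyM f (Finset.mem_of_mem_erase hf)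
    · intro hzf
      rcases Sym2.mem_iff.mp hzf with rfl | rfl
      · exact hvM e (Finset.mem_of_mem_erase he) (Finset.ne_of_mem_erase he) hze
      · exact hwM e (Finset.mem_of_mem_erase he) hze
    · intro hzf
      rcases Sym2.mem_iff.mp hzf with rfl | rfl
      · exact hxM e (Finset.mem_of_mem_erase he) hze
      · exact hyM e (Finset.mem_of_mem_erase he) hze
    · exact hMd e (Finset.mem_of_mem_erase he) f (Finset.mem_of_mem_erase hf) hef z hze
  · intro e he f hf hcef
    simp only [Finset.coe_insert, Set.mem_insert_iff, Finset.mem_coe,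
      Finset.mem_erase] at he hf
    have key : ∀ g ∈ M, g ≠ s(u, v) → c s(x, y) ≠ c g := by
      intro g hg hgne hc
      rw [hcol] at hc
      exact hgne (hMc (Finset.mem_coe.mpr hg) (Finset.mem_coe.mpr huv) hc.symm)
    rcases he with rfl | rfl | ⟨hne, he⟩ <;> rcases hf with rfl | rfl | ⟨hnf, hf⟩
    · rfl
    · exact absurd hcef hcvw_cxy
    · exact absurd hcef (hfree f hf)
    · exact absurd hcef.symm hcvw_cxy
    · rfl
    · exact absurd hcef (key f hf hnf)
    · exact absurd hcef.symm (hfree e he)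
    · exact absurd hcef.symm (key e he hne)
    · exact hMc (Finset.mem_coe.mpr he) (Finset.mem_coe.mpr hf) hcef
  · have h1 : s(x, y) ∉ M.erase s(u, v) := fun h => hxyM (Finset.mem_of_mem_erase h)
    have h2 : s(v, w) ∉ insert s(x, y) (M.erase s(u, v)) := by
      simp only [Finset.mem_insert]
      push_neg
      exact ⟨hne1, fun h => hvwM (Finset.mem_of_mem_erase h)⟩
    rw [Finset.card_insert_of_notMem h2, Finset.card_insert_of_notMem h1,
      Finset.card_erase_of_mem huv]
    have : 1 ≤ M.card := Finset.card_pos.mpr ⟨_, huv⟩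
    omega
end

section
/- Let G be an edge-colored graph and let M be a rainbow matching in G containing two distinct edges u₁v₁ and u₂v₂, of colors c₁ and c₂ respectively. Suppose u₁u₂ is an edge of G with φ(u₁u₂) ∉ φ(M), and there exist two vertex-disjoint edges e₁ and e₂ of G with all endpoints in V(G) ∖ V(M) such that φ(e₁) = c₁ and φ(e₂) = c₂. Then G contains a rainbow matching of size |M| + 1. -/
/-- Configuration (1.2): if `u₁v₁, u₂v₂ ∈ M` are distinct edges of colors `c₁, c₂`,
`u₁u₂` is a free-colored edge of `G`, and there are two vertex-disjoint edges with all
endpoints outside `V(M)` of colors `c₁` and `c₂`, then `G` has a rainbow matching of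
size `|M| + 1`. -/
theorem config_one_two
    {V : Type*} [Fintype V] (G : SimpleGraph V) (c : Sym2 V → ℕ)
    (M : Finset (Sym2 V)) (hM : IsRainbowMatching G c M)
    (u₁ v₁ u₂ v₂ : V) (h₁ : s(u₁, v₁) ∈ M) (h₂ : s(u₂, v₂) ∈ M)
    (hne : s(u₁, v₁) ≠ s(u₂, v₂))
    (hadj : G.Adj u₁ u₂) (hfree : ∀ f ∈ M, c s(u₁, u₂) ≠ c f)
    (p₁ q₁ p₂ q₂ : V) (he₁ : G.Adj p₁ q₁) (he₂ : G.Adj p₂ q₂)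
    (hout : ∀ x ∈ ({p₁, q₁, p₂, q₂} : Set V), ∀ f ∈ M, x ∉ f)
    (hdisj : p₁ ≠ p₂ ∧ p₁ ≠ q₂ ∧ q₁ ≠ p₂ ∧ q₁ ≠ q₂)
    (hc₁ : c s(p₁, q₁) = c s(u₁, v₁)) (hc₂ : c s(p₂, q₂) = c s(u₂, v₂)) :
    ∃ M' : Finset (Sym2 V), IsRainbowMatching G c M' ∧ M'.card = M.card + 1 := by
  classical
  obtain ⟨hMsub, hMdisj, hMinj⟩ := hM
  obtain ⟨hpp, hpq, hqp, hqq⟩ := hdisj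
  set A : Sym2 V := s(u₁, u₂) with hA
  set B : Sym2 V := s(p₁, q₁) with hB
  set C : Sym2 V := s(p₂, q₂) with hC
  set M₀ : Finset (Sym2 V) := (M.erase s(u₁, v₁)).erase s(u₂, v₂) with hM₀def
  have hM₀ : ∀ f ∈ M₀, f ∈ M ∧ f ≠ s(u₁, v₁) ∧ f ≠ s(u₂, v₂) := by
    intro f hf
    simp only [hM₀def, Finset.mem_erase] at hf
    exact ⟨hf.2.2, hf.2.1, hf.1⟩
  have hu1 : u₁ ∈ (s(u₁, v₁) : Sym2 V) := by simp
  have hu2 : u₂ ∈ (s(u₂, v₂) : Sym2 V) := by simp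
  have hp₁ : ∀ f ∈ M, p₁ ∉ f := fun f hf => hout p₁ (by simp) f hf
  have hq₁ : ∀ f ∈ M, q₁ ∉ f := fun f hf => hout q₁ (by simp) f hf
  have hp₂ : ∀ f ∈ M, p₂ ∉ f := fun f hf => hout p₂ (by simp) f hf
  have hq₂ : ∀ f ∈ M, q₂ ∉ f := fun f hf => hout q₂ (by simp) f hf
  have houtA : ∀ x ∈ ({p₁, q₁, p₂, q₂} : Set V), x ∉ A := by
    intro x hx hxA
    rw [hA, Sym2.mem_iff] at hxA
    rcases hxA with rfl | rfl
    · exact hout _ hx _ h₁ hu1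
    · exact hout _ hx _ h₂ hu2
  have hAM : A ∉ M := fun h => hfree A h rfl
  have hBM : B ∉ M := fun h => hp₁ B h (by rw [hB]; simp)
  have hCM : C ∉ M := fun h => hp₂ C h (by rw [hC]; simp)
  have hAB : A ≠ B := by
    intro h
    exact houtA p₁ (by simp) (h ▸ (by rw [hB]; simp : p₁ ∈ B))
  have hAC : A ≠ C := by
    intro h
    exact houtA p₂ (by simp) (h ▸ (by rw [hC]; simp : p₂ ∈ C))
  have hBC : B ≠ C := by
    intro h
    rw [hB, hC, Sym2.eq_iff] at h
    tauto
  -- vertex disjointness helpers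
  have hABv : ∀ v : V, v ∈ A → v ∉ B := by
    intro v hvA hvB
    rw [hB, Sym2.mem_iff] at hvB
    rcases hvB with rfl | rfl
    · exact houtA v (by simp) hvA
    · exact houtA v (by simp) hvA
  have hACv : ∀ v : V, v ∈ A → v ∉ C := by
    intro v hvA hvC
    rw [hC, Sym2.mem_iff] at hvC
    rcases hvC with rfl | rfl
    · exact houtA v (by simp) hvA
    · exact houtA v (by simp) hvA
  have hBCv : ∀ v : V, v ∈ B → v ∉ C := by
    intro v hvB hvC
    rw [hB, Sym2.mem_iff] at hvB
    rw [hC, Sym2.mem_iff] at hvC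
    rcases hvB with rfl | rfl <;> rcases hvC with h | h <;> tauto
  have hAMv : ∀ f ∈ M₀, ∀ v : V, v ∈ A → v ∉ f := by
    intro f hf v hvA
    obtain ⟨hfM, hf1, hf2⟩ := hM₀ f hf
    rw [hA, Sym2.mem_iff] at hvA
    rcases hvA with rfl | rfl
    · exact hMdisj _ h₁ f hfM (fun h => hf1 h.symm) v hu1
    · exact hMdisj _ h₂ f hfM (fun h => hf2 h.symm) v hu2
  have hBMv : ∀ f ∈ M₀, ∀ v : V, v ∈ B → v ∉ f := by
    intro f hf v hvB
    obtain ⟨hfM, _, _⟩ := hM₀ f hf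
    rw [hB, Sym2.mem_iff] at hvB
    rcases hvB with rfl | rfl
    · exact hp₁ f hfM
    · exact hq₁ f hfM
  have hCMv : ∀ f ∈ M₀, ∀ v : V, v ∈ C → v ∉ f := by
    intro f hf v hvC
    obtain ⟨hfM, _, _⟩ := hM₀ f hf
    rw [hC, Sym2.mem_iff] at hvC
    rcases hvC with rfl | rfl
    · exact hp₂ f hfM
    · exact hq₂ f hfM
  -- colors
  have hcAf : ∀ f ∈ M, c A ≠ c f := hfree
  have hcBf : ∀ f ∈ M₀, c B ≠ c f := by
    intro f hf h
    obtain ⟨hfM, hf1, _⟩ := hM₀ f hf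
    exact hf1 (hMinj hfM h₁ (by rw [← h, hc₁]))
  have hcCf : ∀ f ∈ M₀, c C ≠ c f := by
    intro f hf h
    obtain ⟨hfM, _, hf2⟩ := hM₀ f hf
    exact hf2 (hMinj hfM h₂ (by rw [← h, hc₂]))
  have hcBC : c B ≠ c C := by
    intro h
    rw [hB, hC, hc₁, hc₂] at h
    exact hne (hMinj h₁ h₂ h)
  have hcAB : c A ≠ c B := by rw [hB, hc₁]; exact hfree _ h₁
  have hcAC : c A ≠ c C := by rw [hC, hc₂]; exact hfree _ h₂
  refine ⟨insert A (insert B (insert C M₀)), ⟨?_, ?_, ?_⟩, ?_⟩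
  · intro e he
    simp only [Finset.coe_insert, Set.mem_insert_iff, Finset.mem_coe] at he
    rcases he with rfl | rfl | rfl | he
    · exact hadj
    · exact he₁
    · exact he₂
    · exact hMsub (hM₀ e he).1
  · intro e he f hf hef v hve
    simp only [Finset.mem_insert] at he hf
    rcases he with rfl | rfl | rfl | he <;> rcases hf with rfl | rfl | rfl | hf
    · exact absurd rfl hef
    · exact hABv v hve
    · exact hACv v hve
    · exact hAMv f hf v hve
    · intro h; exact hABv v h hve
    · exact absurd rfl hef
    · exact hBCv v hve
    · exact hBMv f hf v hve
    · intro h; exact hACv v h hve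
    · intro h; exact hBCv v h hve
    · exact absurd rfl hef
    · exact hCMv f hf v hve
    · intro h; exact hAMv e he v h hve
    · intro h; exact hBMv e he v h hve
    · intro h; exact hCMv e he v h hve
    · exact hMdisj e (hM₀ e he).1 f (hM₀ f hf).1 hef v hve
  · intro e he f hf hcef
    simp only [Finset.coe_insert, Set.mem_insert_iff, Finset.mem_coe] at he hf
    rcases he with rfl | rfl | rfl | he <;> rcases hf with rfl | rfl | rfl | hf
    · rfl
    · exact absurd hcef hcAB
    · exact absurd hcef hcAC
    · exact absurd hcef (hcAf f (hM₀ f hf).1)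
    · exact absurd hcef.symm hcAB
    · rfl
    · exact absurd hcef hcBC
    · exact absurd hcef (hcBf f hf)
    · exact absurd hcef.symm hcAC
    · exact absurd hcef.symm hcBC
    · rfl
    · exact absurd hcef (hcCf f hf)
    · exact absurd hcef.symm (hcAf e (hM₀ e he).1)
    · exact absurd hcef.symm (hcBf e he)
    · exact absurd hcef.symm (hcCf e he)
    · exact hMinj (Finset.mem_coe.mpr (hM₀ e he).1) (Finset.mem_coe.mpr (hM₀ f hf).1) hcef
  · have hAni : A ∉ insert B (insert C M₀) := by
      simp only [Finset.mem_insert]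
      push_neg
      exact ⟨hAB, hAC, fun h => hAM (hM₀ A h).1⟩
    have hBni : B ∉ insert C M₀ := by
      simp only [Finset.mem_insert]
      push_neg
      exact ⟨hBC, fun h => hBM (hM₀ B h).1⟩
    have hCni : C ∉ M₀ := fun h => hCM (hM₀ C h).1
    have h2M : s(u₂, v₂) ∈ M.erase s(u₁, v₁) := Finset.mem_erase.mpr ⟨Ne.symm hne, h₂⟩
    have hcard : M₀.card = M.card - 2 := by
      rw [hM₀def, Finset.card_erase_of_mem h2M, Finset.card_erase_of_mem h₁]
      omega
    have h2le : 2 ≤ M.card := Finset.one_lt_card.mpr ⟨_, h₁, _, h₂, hne⟩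
    rw [Finset.card_insert_of_notMem hAni, Finset.card_insert_of_notMem hBni,
      Finset.card_insert_of_notMem hCni, hcard]
    omega
end

section
/- Let G be an edge-colored graph and let M be a rainbow matching in G containing two distinct edges u₁v₁ and u₂v₂, of colors c₁ and c₂ respectively. Suppose u₁u₂ is an edge of G with color α ∉ φ(M), there is a vertex w ∈ V(G) ∖ V(M) with v₁w an edge of G of color β ∉ φ(M) and α ≠ β, and there is an edge e₂ of G with both endpoints in V(G) ∖ V(M), of color c₂, such that w is not an endpoint of e₂. Then G contains a rainbow matching of size |M| + 1. -/
lemma disj_aux {V : Type*} {a b x y v : V} (hva : v ∈ s(a, b)) (hvx : v ∈ s(x, y))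
    (h1 : a ≠ x) (h2 : a ≠ y) (h3 : b ≠ x) (h4 : b ≠ y) : False := by
  rw [Sym2.mem_iff] at hva hvx
  rcases hva with rfl | rfl <;> rcases hvx with rfl | rfl <;> simp_all

/-- Configuration (1.3): if `u₁v₁, u₂v₂ ∈ M` are distinct edges of colors `c₁, c₂`,
`u₁u₂` is an edge of free color `α`, `v₁w` is an edge of free color `β ≠ α` with
`w ∉ V(M)`, and there is an edge of color `c₂` with both endpoints outside `V(M)`
avoiding `w`, then `G` has a rainbow matching of size `|M| + 1`. -/
theorem config_one_three
    {V : Type*} [Fintype V] (G : SimpleGraph V) (c : Sym2 V → ℕ)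
    (M : Finset (Sym2 V)) (hM : IsRainbowMatching G c M)
    (u₁ v₁ u₂ v₂ : V) (h₁ : s(u₁, v₁) ∈ M) (h₂ : s(u₂, v₂) ∈ M)
    (hne : s(u₁, v₁) ≠ s(u₂, v₂))
    (hadj : G.Adj u₁ u₂) (hαfree : ∀ f ∈ M, c s(u₁, u₂) ≠ c f)
    (w : V) (hwM : ∀ f ∈ M, w ∉ f) (hv₁w : G.Adj v₁ w)
    (hβfree : ∀ f ∈ M, c s(v₁, w) ≠ c f)
    (hαβ : c s(u₁, u₂) ≠ c s(v₁, w))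
    (p₂ q₂ : V) (he₂ : G.Adj p₂ q₂)
    (hp₂ : ∀ f ∈ M, p₂ ∉ f) (hq₂ : ∀ f ∈ M, q₂ ∉ f)
    (hc₂ : c s(p₂, q₂) = c s(u₂, v₂))
    (hwp₂ : w ≠ p₂) (hwq₂ : w ≠ q₂) :
    ∃ M' : Finset (Sym2 V), IsRainbowMatching G c M' ∧ M'.card = M.card + 1 := by
  classical
  obtain ⟨hMe, hMm, hMi⟩ := hM
  -- vertex facts
  have hu₁v₁ : u₁ ≠ v₁ := (G.mem_edgeSet.mp (hMe h₁)).ne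
  have hu₂v₂ : u₂ ≠ v₂ := (G.mem_edgeSet.mp (hMe h₂)).ne
  have hu₁ : u₁ ∉ s(u₂, v₂) := hMm _ h₁ _ h₂ hne u₁ (by simp)
  have hv₁ : v₁ ∉ s(u₂, v₂) := hMm _ h₁ _ h₂ hne v₁ (by simp)
  have hu₁u₂ : u₁ ≠ u₂ := fun h => hu₁ (by simp [h])
  have hu₁v₂ : u₁ ≠ v₂ := fun h => hu₁ (by simp [h])
  have hv₁u₂ : v₁ ≠ u₂ := fun h => hv₁ (by simp [h])
  have hv₁v₂ : v₁ ≠ v₂ := fun h => hv₁ (by simp [h])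
  have hwu₁ : w ≠ u₁ := fun h => hwM _ h₁ (by simp [h])
  have hwv₁ : w ≠ v₁ := fun h => hwM _ h₁ (by simp [h])
  have hwu₂ : w ≠ u₂ := fun h => hwM _ h₂ (by simp [h])
  have hwv₂ : w ≠ v₂ := fun h => hwM _ h₂ (by simp [h])
  have hp₂u₁ : p₂ ≠ u₁ := fun h => hp₂ _ h₁ (by simp [h])
  have hp₂v₁ : p₂ ≠ v₁ := fun h => hp₂ _ h₁ (by simp [h])
  have hp₂u₂ : p₂ ≠ u₂ := fun h => hp₂ _ h₂ (by simp [h])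
  have hq₂u₁ : q₂ ≠ u₁ := fun h => hq₂ _ h₁ (by simp [h])
  have hq₂v₁ : q₂ ≠ v₁ := fun h => hq₂ _ h₁ (by simp [h])
  have hq₂u₂ : q₂ ≠ u₂ := fun h => hq₂ _ h₂ (by simp [h])
  have hp₂q₂ : p₂ ≠ q₂ := he₂.ne
  set M₀ : Finset (Sym2 V) := (M.erase s(u₁, v₁)).erase s(u₂, v₂) with hM₀
  have hM₀sub : ∀ f ∈ M₀, f ∈ M ∧ f ≠ s(u₁, v₁) ∧ f ≠ s(u₂, v₂) := by
    intro f hf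
    simp only [hM₀, Finset.mem_erase] at hf
    exact ⟨hf.2.2, hf.2.1, hf.1⟩
  set M' : Finset (Sym2 V) :=
    insert s(u₁, u₂) (insert s(v₁, w) (insert s(p₂, q₂) M₀)) with hM'
  -- new edges are not in M
  have hAnM : s(u₁, u₂) ∉ M := fun h => hαfree _ h rfl
  have hBnM : s(v₁, w) ∉ M := fun h => hβfree _ h rfl
  have hCnM : s(p₂, q₂) ∉ M := fun h => hp₂ _ h (by simp)
  -- membership characterization
  have hmem : ∀ e ∈ M', e = s(u₁, u₂) ∨ e = s(v₁, w) ∨ e = s(p₂, q₂) ∨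
      (e ∈ M ∧ e ≠ s(u₁, v₁) ∧ e ≠ s(u₂, v₂)) := by
    intro e he
    simp only [hM', Finset.mem_insert] at he
    rcases he with h | h | h | h
    · exact Or.inl h
    · exact Or.inr (Or.inl h)
    · exact Or.inr (Or.inr (Or.inl h))
    · exact Or.inr (Or.inr (Or.inr (hM₀sub e h)))
  refine ⟨M', ⟨?_, ?_, ?_⟩, ?_⟩
  · -- edges
    intro e he
    rcases hmem e he with rfl | rfl | rfl | ⟨h, _, _⟩
    · exact hadj
    · exact hv₁w
    · exact he₂
    · exact hMe h
  · -- matching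
    intro e he f hf hef v hve hvf
    have key : ∀ x, x ∈ s(u₁, u₂) ∨ x ∈ s(v₁, w) ∨ x ∈ s(p₂, q₂) →
        ∀ g ∈ M, g ≠ s(u₁, v₁) → g ≠ s(u₂, v₂) → x ∉ g := by
      intro x hx g hg hg₁ hg₂ hxg
      rcases hx with hx | hx | hx <;> rw [Sym2.mem_iff] at hx
      · rcases hx with rfl | rfl
        · exact hMm _ h₁ _ hg (Ne.symm hg₁) x (by simp) hxg
        · exact hMm _ h₂ _ hg (Ne.symm hg₂) x (by simp) hxg
      · rcases hx with rfl | rfl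
        · exact hMm _ h₁ _ hg (Ne.symm hg₁) x (by simp) hxg
        · exact hwM _ hg hxg
      · rcases hx with rfl | rfl
        · exact hp₂ _ hg hxg
        · exact hq₂ _ hg hxg
    rcases hmem e he with rfl | rfl | rfl | ⟨heM, he₁, heb⟩ <;>
      rcases hmem f hf with rfl | rfl | rfl | ⟨hfM, hf₁, hfb⟩
    · exact hef rfl
    · exact disj_aux hve hvf hu₁v₁ hwu₁.symm hv₁u₂.symm hwu₂.symm
    · exact disj_aux hve hvf hp₂u₁.symm hq₂u₁.symm hp₂u₂.symm hq₂u₂.symm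
    · exact key v (Or.inl hve) _ hfM hf₁ hfb hvf
    · exact disj_aux hve hvf hu₁v₁.symm hv₁u₂ hwu₁ hwu₂
    · exact hef rfl
    · exact disj_aux hve hvf hp₂v₁.symm hq₂v₁.symm hwp₂ hwq₂
    · exact key v (Or.inr (Or.inl hve)) _ hfM hf₁ hfb hvf
    · exact disj_aux hve hvf hp₂u₁ hp₂u₂ hq₂u₁ hq₂u₂
    · exact disj_aux hve hvf hp₂v₁ hwp₂.symm hq₂v₁ hwq₂.symm
    · exact hef rfl
    · exact key v (Or.inr (Or.inr hve)) _ hfM hf₁ hfb hvf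
    · exact key v (Or.inl hvf) _ heM he₁ heb hve
    · exact key v (Or.inr (Or.inl hvf)) _ heM he₁ heb hve
    · exact key v (Or.inr (Or.inr hvf)) _ heM he₁ heb hve
    · exact hMm _ heM _ hfM hef v hve hvf
  · -- colors
    have hcαγ : c s(u₁, u₂) ≠ c s(p₂, q₂) := by rw [hc₂]; exact hαfree _ h₂
    have hcβγ : c s(v₁, w) ≠ c s(p₂, q₂) := by rw [hc₂]; exact hβfree _ h₂
    have hc₂M : ∀ g ∈ M, g ≠ s(u₂, v₂) → c s(p₂, q₂) ≠ c g := by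
      intro g hg hg₂ h
      exact hg₂ (hMi (Finset.mem_coe.mpr h₂) (Finset.mem_coe.mpr hg) (hc₂.symm.trans h)).symm
    intro e he f hf hcef
    rcases hmem e (Finset.mem_coe.mp he) with rfl | rfl | rfl | ⟨heM, he₁, he₂'⟩ <;>
      rcases hmem f (Finset.mem_coe.mp hf) with rfl | rfl | rfl | ⟨hfM, hf₁, hf₂⟩
    · rfl
    · exact absurd hcef hαβ
    · exact absurd hcef hcαγ
    · exact absurd hcef (hαfree _ hfM)
    · exact absurd hcef.symm hαβ
    · rfl
    · exact absurd hcef hcβγ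
    · exact absurd hcef (hβfree _ hfM)
    · exact absurd hcef.symm hcαγ
    · exact absurd hcef.symm hcβγ
    · rfl
    · exact absurd hcef (hc₂M _ hfM hf₂)
    · exact absurd hcef.symm (hαfree _ heM)
    · exact absurd hcef.symm (hβfree _ heM)
    · exact absurd hcef.symm (hc₂M _ heM he₂')
    · exact hMi (Finset.mem_coe.mpr heM) (Finset.mem_coe.mpr hfM) hcef
  · -- card
    have h₂' : s(u₂, v₂) ∈ M.erase s(u₁, v₁) := Finset.mem_erase.mpr ⟨Ne.symm hne, h₂⟩
    have hcard₀ : M₀.card = M.card - 2 := by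
      rw [hM₀, Finset.card_erase_of_mem h₂', Finset.card_erase_of_mem h₁]
      omega
    have hMge : 2 ≤ M.card := by
      have := Finset.card_erase_of_mem h₁
      have h1 := Finset.card_pos.mpr ⟨_, h₂'⟩
      omega
    have hCn : s(p₂, q₂) ∉ M₀ := fun h => hCnM (hM₀sub _ h).1
    have hBn : s(v₁, w) ∉ insert s(p₂, q₂) M₀ := by
      simp only [Finset.mem_insert]
      rintro (h | h)
      · rw [Sym2.eq_iff] at h
        exact h.elim (fun hh => hp₂v₁ hh.1.symm) (fun hh => hq₂v₁ hh.1.symm)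
      · exact hBnM (hM₀sub _ h).1
    have hAn : s(u₁, u₂) ∉ insert s(v₁, w) (insert s(p₂, q₂) M₀) := by
      simp only [Finset.mem_insert]
      rintro (h | h | h)
      · exact hαβ (by rw [h])
      · rw [Sym2.eq_iff] at h
        exact h.elim (fun hh => hp₂u₁ hh.1.symm) (fun hh => hq₂u₁ hh.1.symm)
      · exact hAnM (hM₀sub _ h).1
    rw [hM', Finset.card_insert_of_notMem hAn, Finset.card_insert_of_notMem hBn,
      Finset.card_insert_of_notMem hCn, hcard₀]
    omega
end
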